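/- Let X ∈ sl_n(k) be such that ad X (acting on gl_n(k)) has no nonzero rational (equivalently, no nonzero integer) eigenvalue. Then the stabilizer of the connection X dlog z under the gauge action of SL_n(K) equals the centralizer of X in SL_n(k): every g ∈ SL_n(K) with gXg^{-1} + z∂_z(g)g^{-1} = X lies in SL_n(k) and commutes with X. -/

import Mathlib

open HahnSeries Matrix

variable {k : Type*} [Field k]

/-- The derivation `z * d/dz` on formal Laurent series. -/
noncomputable def zD (f : LaurentSeries k) : LaurentSeries k where
  coeff i := (i : k) * f.coeff i
  isPWO_support' := f.isPWO_support'.mono (by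
    intro i hi
    simp only [Function.mem_support, ne_eq] at hi ⊢
    exact fun h => hi (by rw [h, mul_zero]))

/-- `z∂_z` applied entrywise to a matrix of Laurent series. -/
noncomputable def zDM {n : ℕ} (g : Matrix (Fin n) (Fin n) (LaurentSeries k)) :
    Matrix (Fin n) (Fin n) (LaurentSeries k) :=
  Matrix.of fun a b => zD (g a b)

/-- A constant matrix, viewed as a matrix of Laurent series. -/
noncomputable def constM {n : ℕ} (X : Matrix (Fin n) (Fin n) k) :
    Matrix (Fin n) (Fin n) (LaurentSeries k) :=
  X.map (HahnSeries.C : k →+* LaurentSeries k)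

/-- The `i`-th coefficient matrix of a matrix of Laurent series. -/
def coeffM {n : ℕ} (g : Matrix (Fin n) (Fin n) (LaurentSeries k)) (i : ℤ) :
    Matrix (Fin n) (Fin n) k :=
  Matrix.of fun a b => (g a b).coeff i

/-!
Comparing coefficients of `z ^ i` in `g X + z ∂_z g = X g` gives `[X, g_i] = i • g_i` for the
coefficient matrices `g_i` of `g`. As `ad X` has no nonzero integer eigenvalue, `g_i = 0` for
`i ≠ 0`, so `g = g_0` is constant, and the case `i = 0` says that `g_0` commutes with `X`.
-/

section CoefficientMatrices

variable {n : ℕ}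

@[simp]
theorem coeff_zD (f : LaurentSeries k) (i : ℤ) : (zD f).coeff i = (i : k) * f.coeff i := rfl

theorem coeffM_injective {g h : Matrix (Fin n) (Fin n) (LaurentSeries k)}
    (hgh : ∀ i, coeffM g i = coeffM h i) : g = h := by
  ext a b i
  exact congrFun (congrFun (hgh i) a) b

@[simp]
theorem coeffM_add (g h : Matrix (Fin n) (Fin n) (LaurentSeries k)) (i : ℤ) :
    coeffM (g + h) i = coeffM g i + coeffM h i := by
  ext a b
  simp [coeffM]

@[simp]
theorem coeffM_zDM (g : Matrix (Fin n) (Fin n) (LaurentSeries k)) (i : ℤ) :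
    coeffM (zDM g) i = (i : k) • coeffM g i := by
  ext a b
  simp [coeffM, zDM]

@[simp]
theorem coeffM_constM (X : Matrix (Fin n) (Fin n) k) (i : ℤ) :
    coeffM (constM X) i = if i = 0 then X else 0 := by
  ext a b
  split_ifs with hi <;> simp [coeffM, constM, HahnSeries.C_apply, hi]

@[simp]
theorem coeffM_mul_constM (g : Matrix (Fin n) (Fin n) (LaurentSeries k))
    (X : Matrix (Fin n) (Fin n) k) (i : ℤ) :
    coeffM (g * constM X) i = coeffM g i * X := by
  ext a b
  simp [coeffM, constM, mul_apply, HahnSeries.coeff_sum, HahnSeries.C_apply,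
    HahnSeries.coeff_mul_single_zero]

@[simp]
theorem coeffM_constM_mul (X : Matrix (Fin n) (Fin n) k)
    (g : Matrix (Fin n) (Fin n) (LaurentSeries k)) (i : ℤ) :
    coeffM (constM X * g) i = X * coeffM g i := by
  ext a b
  simp [coeffM, constM, mul_apply, HahnSeries.coeff_sum, HahnSeries.C_apply]

theorem det_constM (X : Matrix (Fin n) (Fin n) k) : (constM X).det = HahnSeries.C X.det := by
  rw [constM, ← RingHom.mapMatrix_apply, RingHom.map_det]

end CoefficientMatrices

section GaugeStabilizer

variable {n : ℕ} {X : Matrix (Fin n) (Fin n) k} {g : Matrix (Fin n) (Fin n) (LaurentSeries k)}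

theorem commutator_coeffM_of_gauge_fixed (hfix : g * constM X + zDM g = constM X * g) (i : ℤ) :
    X * coeffM g i - coeffM g i * X = (i : k) • coeffM g i := by
  have hi := congrArg (coeffM · i) hfix
  simp only [coeffM_add, coeffM_mul_constM, coeffM_zDM, coeffM_constM_mul] at hi
  rw [← hi]
  abel

theorem coeffM_eq_zero_of_gauge_fixed
    (hrat : ∀ (q : ℚ) (B : Matrix (Fin n) (Fin n) k),
      B ≠ 0 → X * B - B * X = (q : k) • B → q = 0)
    (hfix : g * constM X + zDM g = constM X * g) {i : ℤ} (hi : i ≠ 0) : coeffM g i = 0 := by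
  by_contra hB
  refine hi (Int.cast_eq_zero.mp (hrat i _ hB ?_))
  rw [commutator_coeffM_of_gauge_fixed hfix, Rat.cast_intCast]

theorem eq_constM_of_gauge_fixed
    (hrat : ∀ (q : ℚ) (B : Matrix (Fin n) (Fin n) k),
      B ≠ 0 → X * B - B * X = (q : k) • B → q = 0)
    (hfix : g * constM X + zDM g = constM X * g) : g = constM (coeffM g 0) := by
  refine coeffM_injective fun i => ?_
  rw [coeffM_constM]
  split_ifs with hi
  · rw [hi]
  · exact coeffM_eq_zero_of_gauge_fixed hrat hfix hi

end GaugeStabilizer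

theorem stmt3_general {n : ℕ} (X : Matrix (Fin n) (Fin n) k)
    (hrat : ∀ (q : ℚ) (B : Matrix (Fin n) (Fin n) k),
      B ≠ 0 → X * B - B * X = (q : k) • B → q = 0)
    (g : Matrix (Fin n) (Fin n) (LaurentSeries k)) (hg : g.det = 1)
    (hfix : g * constM X + zDM g = constM X * g) :
    ∃ g₀ : Matrix (Fin n) (Fin n) k,
      g = constM g₀ ∧ g₀.det = 1 ∧ g₀ * X = X * g₀ := by
  have hconst := eq_constM_of_gauge_fixed hrat hfix
  refine ⟨coeffM g 0, hconst, ?_, ?_⟩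
  · apply HahnSeries.C_injective (Γ := ℤ)
    rw [← det_constM, ← hconst, hg, map_one]
  · have hcomm := commutator_coeffM_of_gauge_fixed hfix 0
    rw [Int.cast_zero, zero_smul, sub_eq_zero] at hcomm
    exact hcomm.symm

/-- Stabilizer of `X dlog z` under the gauge action of `SL_n(K)`:
if `X ∈ sl_n(k)` has no nonzero rational eigenvalue of `ad X`, then every
`g ∈ SL_n(K)` fixing the connection `X dlog z` (i.e. `gXg⁻¹ + z∂_z(g)g⁻¹ = X`,
written multiplicatively as `gX + z∂_z(g) = Xg`) is a constant matrix in
`SL_n(k)` commuting with `X`. -/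
theorem stmt3 {n : ℕ} (X : Matrix (Fin n) (Fin n) k) (hX : Matrix.trace X = 0)
    (hrat : ∀ (q : ℚ) (B : Matrix (Fin n) (Fin n) k),
      B ≠ 0 → X * B - B * X = (q : k) • B → q = 0)
    (g : Matrix (Fin n) (Fin n) (LaurentSeries k)) (hg : g.det = 1)
    (hfix : g * constM X + zDM g = constM X * g) :
    ∃ g₀ : Matrix (Fin n) (Fin n) k,
      g = constM g₀ ∧ g₀.det = 1 ∧ g₀ * X = X * g₀ :=
  stmt3_general X hrat g hg hfix
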